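/- Fix g ≥ 2. Let L₁ be the set of tuples (A₁,...,A_g, B₁,...,B_g) ∈ SU(2)^{2g} such that B₁ = -1, B_i = 1 for 2 ≤ i ≤ g-1, and A_g*B_g*A_g⁻¹*B_g⁻¹ = -1. Then the map from SU(2)^{g-1} to the quotient of L₁ by simultaneous SU(2)-conjugation, sending (A₁,...,A_{g-1}) to the conjugation class of the tuple with these first g-1 entries, A_g = A₀, B₁ = -1, B_i = 1 for 2 ≤ i ≤ g-1, and B_g = B₀, is a bijection. In particular the quotient of L₁ by simultaneous conjugation is in bijection with SU(2)^{g-1}. -/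

import Mathlib

/-!
A pair `(A, B)` in `SU(2)` with commutator `-1` anticommutes, so `A` and `B` are traceless and
square to `-1`. Two elements `X, Y` of `SU(2)` with `X² = Y² = -1` are conjugate: the quaternion
`1 - YX` satisfies `(1 - YX) X = Y (1 - YX)`, so its normalisation lies in `SU(2)` and conjugates
`X` to `Y` unless `YX = 1`, i.e. `X = -Y`, where any element anticommuting with `X` does. The
normalised `1 - YX` also commutes with every element anticommuting with both `X` and `Y`.
Conjugating first `A_g` to `A₀`, then `B_g` to `B₀` by an element commuting with `A₀`, brings
every point of `L₁` to the standard form, which gives surjectivity. Injectivity holds because an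
element of `SU(2)` fixing `A₀` and `B₀` under conjugation is scalar, hence acts trivially.
-/

open Matrix Complex

/-- `SU2` is the special unitary group of 2×2 complex matrices of determinant 1. -/
abbrev SU2 := Matrix.specialUnitaryGroup (Fin 2) ℂ

/-- The group structure on the special unitary group, with inverse given by
the conjugate transpose. -/
noncomputable instance instGroupSUC (n : ℕ) : Group (Matrix.specialUnitaryGroup (Fin n) ℂ) where
  inv A := ⟨star A.1, by
    obtain ⟨hu, hd⟩ := Matrix.mem_specialUnitaryGroup_iff.mp A.2
    refine Matrix.mem_specialUnitaryGroup_iff.mpr ⟨Unitary.star_mem hu, ?_⟩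
    rw [Matrix.star_eq_conjTranspose, Matrix.det_conjTranspose, hd, star_one]⟩
  inv_mul_cancel A :=
    Subtype.ext (Unitary.star_mul_self_of_mem (Matrix.mem_specialUnitaryGroup_iff.mp A.2).1)

/-- The element `-1` of `SU(2)`. -/
noncomputable def negOne : SU2 := ⟨-1, by
  refine Matrix.mem_specialUnitaryGroup_iff.mpr ⟨⟨?_, ?_⟩, ?_⟩ <;>
    simp [Matrix.det_neg]⟩

/-- The element `A₀ = diag(i, -i)` of `SU(2)`. -/
noncomputable def A₀ : SU2 := ⟨!![I, 0; 0, -I], by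
  refine Matrix.mem_specialUnitaryGroup_iff.mpr ⟨⟨?_, ?_⟩, ?_⟩
  · ext i j
    fin_cases i <;> fin_cases j <;>
      simp [Matrix.mul_apply, Fin.sum_univ_succ, Matrix.conjTranspose_apply]
  · ext i j
    fin_cases i <;> fin_cases j <;>
      simp [Matrix.mul_apply, Fin.sum_univ_succ, Matrix.conjTranspose_apply]
  · simp [Matrix.det_fin_two_of]⟩

/-- The element `B₀ = [[0,1],[-1,0]]` of `SU(2)`. -/
noncomputable def B₀ : SU2 := ⟨!![0, 1; -1, 0], by
  refine Matrix.mem_specialUnitaryGroup_iff.mpr ⟨⟨?_, ?_⟩, ?_⟩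
  · ext i j
    fin_cases i <;> fin_cases j <;>
      simp [Matrix.mul_apply, Fin.sum_univ_succ, Matrix.conjTranspose_apply]
  · ext i j
    fin_cases i <;> fin_cases j <;>
      simp [Matrix.mul_apply, Fin.sum_univ_succ, Matrix.conjTranspose_apply]
  · simp [Matrix.det_fin_two_of]⟩

@[simp] lemma coe_inv_SU2 (A : SU2) :
    ((A⁻¹ : SU2) : Matrix (Fin 2) (Fin 2) ℂ) = star (A : Matrix (Fin 2) (Fin 2) ℂ) := rfl

/-- The commutator of the standard pair `(A₀, B₀)` is `-1`. -/
lemma commutator_A₀_B₀ : A₀ * B₀ * A₀⁻¹ * B₀⁻¹ = negOne := by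
  apply Subtype.ext
  ext i j
  fin_cases i <;> fin_cases j <;>
    simp [A₀, B₀, negOne, Matrix.mul_apply, Matrix.vecMul, dotProduct,
      Fin.sum_univ_succ, Matrix.conjTranspose_apply]

/-- A tuple `(A₁,…,A_g,B₁,…,B_g)` of elements of `SU(2)`. -/
abbrev SU2Tuple (g : ℕ) := (Fin g → SU2) × (Fin g → SU2)

/-- Two tuples are related iff they are simultaneously conjugate by an element of `SU(2)`. -/
def ConjRel {g : ℕ} (p q : SU2Tuple g) : Prop :=
  ∃ u : SU2, (∀ i, u * p.1 i * u⁻¹ = q.1 i) ∧ (∀ i, u * p.2 i * u⁻¹ = q.2 i)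

/-- The last index `g` of a tuple `(A₁,…,A_g,B₁,…,B_g)`. -/
def lastIdx (g : ℕ) (hg : 2 ≤ g) : Fin g := ⟨g - 1, by omega⟩

/-- The Lagrangian `L₁ = L(H₁°, w₁)` of the paper (equation (1.10)): tuples with
`B₁ = -1`, `Bᵢ = 1` for `2 ≤ i ≤ g-1`, and `A_g B_g A_g⁻¹ B_g⁻¹ = -1`. -/
def L1set (g : ℕ) (hg : 2 ≤ g) : Set (SU2Tuple g) :=
  {p | p.2 ⟨0, by omega⟩ = negOne ∧
    (∀ i : Fin g, 1 ≤ (i : ℕ) → (i : ℕ) < g - 1 → p.2 i = 1) ∧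
    p.1 (lastIdx g hg) * p.2 (lastIdx g hg) *
      (p.1 (lastIdx g hg))⁻¹ * (p.2 (lastIdx g hg))⁻¹ = negOne}

/-- The standard representative in `L₁` with prescribed first `g-1` entries `A₁,…,A_{g-1}`,
with `A_g = A₀`, `B₁ = -1`, `Bᵢ = 1` for `2 ≤ i ≤ g-1` and `B_g = B₀`. -/
noncomputable def stdL1 (g : ℕ) (v : Fin (g - 1) → SU2) : SU2Tuple g :=
  (fun i => if h : (i : ℕ) < g - 1 then v ⟨i, h⟩ else A₀,
   fun i => if (i : ℕ) = 0 then negOne else if (i : ℕ) < g - 1 then 1 else B₀)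

lemma stdL1_mem (g : ℕ) (hg : 2 ≤ g) (v : Fin (g - 1) → SU2) : stdL1 g v ∈ L1set g hg := by
  refine ⟨?_, fun i h1 hi => ?_, ?_⟩
  · simp [stdL1]
  · have h0 : ¬ ((i : ℕ) = 0) := by omega
    simp [stdL1, if_neg h0, if_pos hi]
  · have h : ¬ ((g - 1 : ℕ) < g - 1) := lt_irrefl _
    have h0 : ¬ ((g - 1 : ℕ) = 0) := by omega
    simp only [stdL1, lastIdx, dif_neg h, if_neg h, if_neg h0]
    exact commutator_A₀_B₀

theorem one_sub_mul_mul_eq_mul_one_sub_mul {R : Type*} [Ring R] {x y : R}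
    (hx : x * x = -1) (hy : y * y = -1) : (1 - y * x) * x = y * (1 - y * x) := by
  rw [sub_mul, mul_sub, one_mul, mul_one, mul_assoc, hx, ← mul_assoc, hy]
  noncomm_ring

theorem commute_one_sub_mul_of_anticommute {R : Type*} [Ring R] {x y z : R}
    (hx : z * x = -(x * z)) (hy : z * y = -(y * z)) : Commute z (1 - y * x) := by
  refine (Commute.one_right z).sub_right ?_
  change z * (y * x) = y * x * z
  rw [← mul_assoc, hy, neg_mul, mul_assoc, hx, mul_neg, neg_neg, mul_assoc]

open ComplexConjugate

namespace SU2

theorem mul_star_self (W : SU2) : W.1 * star W.1 = 1 :=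
  Unitary.mul_star_self_of_mem (Matrix.mem_specialUnitaryGroup_iff.mp W.2).1

theorem adjugate_eq_star (W : SU2) : W.1.adjugate = star W.1 := by
  calc W.1.adjugate = W.1.adjugate * W.1 * star W.1 := by
        rw [mul_assoc, mul_star_self, mul_one]
    _ = star W.1 := by
        rw [Matrix.adjugate_mul, (Matrix.mem_specialUnitaryGroup_iff.mp W.2).2, one_smul, one_mul]

theorem eta_fin_two (W : SU2) :
    W.1 = !![W.1 0 0, W.1 0 1; -conj (W.1 0 1), conj (W.1 0 0)] := by
  have h := adjugate_eq_star W
  rw [Matrix.adjugate_fin_two] at h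
  have h00 : W.1 1 1 = conj (W.1 0 0) := by
    simpa [Matrix.star_apply] using congrFun (congrFun h 0) 0
  have h10 : W.1 1 0 = -conj (W.1 0 1) := by
    simpa [Matrix.star_apply] using (congrArg conj (congrFun (congrFun h 0) 1)).symm
  ext i j; fin_cases i <;> fin_cases j <;> simp [h00, h10]

theorem add_star_eq_trace_smul (W : SU2) : W.1 + star W.1 = W.1.trace • 1 := by
  rw [← adjugate_eq_star, Matrix.adjugate_fin_two, Matrix.trace_fin_two]
  ext i j; fin_cases i <;> fin_cases j <;> simp [add_comm]

theorem mem_of_mul_conj_add_mul_conj {a b : ℂ} (h : a * conj a + b * conj b = 1) :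
    !![a, b; -conj b, conj a] ∈ Matrix.specialUnitaryGroup (Fin 2) ℂ := by
  refine Matrix.mem_specialUnitaryGroup_iff.mpr ⟨Matrix.mem_unitaryGroup_iff.mpr ?_, ?_⟩
  · ext i j
    fin_cases i <;> fin_cases j <;>
      simp [Matrix.mul_apply, Fin.sum_univ_succ, Matrix.star_apply] <;>
      first | ring1 | linear_combination h
  · rw [Matrix.det_fin_two_of]
    linear_combination h

theorem exists_coe_eq_smul {a b : ℂ} (h : !![a, b; -conj b, conj a] ≠ 0) :
    ∃ (r : ℂ) (w : SU2), w.1 = r • !![a, b; -conj b, conj a] := by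
  set s : ℝ := Complex.normSq a + Complex.normSq b
  have hs : 0 < s := by
    have : a ≠ 0 ∨ b ≠ 0 := by
      by_contra! hab
      exact h (by ext i j; fin_cases i <;> fin_cases j <;> simp [hab.1, hab.2])
    rcases this with ha | hb
    · exact add_pos_of_pos_of_nonneg (Complex.normSq_pos.mpr ha) (Complex.normSq_nonneg b)
    · exact add_pos_of_nonneg_of_pos (Complex.normSq_nonneg a) (Complex.normSq_pos.mpr hb)
  set r : ℝ := (Real.sqrt s)⁻¹
  have hr : (r : ℂ) ^ 2 * (a * conj a + b * conj b) = 1 := by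
    rw [mul_conj, mul_conj, ← ofReal_add, ← ofReal_pow, ← ofReal_mul, inv_pow,
      Real.sq_sqrt hs.le, inv_mul_cancel₀ hs.ne', ofReal_one]
  refine ⟨r, ⟨_, mem_of_mul_conj_add_mul_conj (a := r * a) (b := r * b) ?_⟩, ?_⟩
  · simp only [map_mul, Complex.conj_ofReal]
    linear_combination hr
  · ext i j; fin_cases i <;> fin_cases j <;> simp

theorem conj_eq_iff_mul_eq {w X Y : SU2} : w * X * w⁻¹ = Y ↔ w.1 * X.1 = Y.1 * w.1 := by
  rw [mul_inv_eq_iff_eq_mul, Subtype.ext_iff]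
  rfl

theorem conj_negOne (u : SU2) : u * negOne * u⁻¹ = negOne :=
  conj_eq_iff_mul_eq.mpr (by simp [negOne])

theorem anticommute_of_commutator_eq_negOne {A B : SU2} (h : A * B * A⁻¹ * B⁻¹ = negOne) :
    A.1 * B.1 = -(B.1 * A.1) := by
  have h' : A * B = negOne * (B * A) := by rw [← h]; group
  simpa [negOne] using congrArg Subtype.val h'

theorem trace_eq_zero_of_anticommute {A B : SU2} (h : A.1 * B.1 = -(B.1 * A.1)) :
    B.1.trace = 0 := by
  have h' : (A.1 * B.1 * star A.1).trace = B.1.trace := by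
    rw [Matrix.trace_mul_cycle, mul_eq_one_comm.mp (mul_star_self A), one_mul]
  rw [h, neg_mul, Matrix.trace_neg, mul_assoc, mul_star_self, mul_one, neg_eq_iff_add_eq_zero,
    ← two_mul] at h'
  exact (mul_eq_zero.mp h').resolve_left two_ne_zero

theorem mul_self_eq_neg_one_of_trace_eq_zero {X : SU2} (h : X.1.trace = 0) :
    X.1 * X.1 = -1 := by
  have hstar : star X.1 = -X.1 := by
    rw [eq_neg_iff_add_eq_zero, add_comm, add_star_eq_trace_smul, h, zero_smul]
  rw [← neg_eq_iff_eq_neg, ← mul_neg, ← hstar, mul_star_self]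

theorem mul_self_eq_neg_one_of_commutator_eq_negOne {A B : SU2}
    (h : A * B * A⁻¹ * B⁻¹ = negOne) :
    A.1 * A.1 = -1 ∧ B.1 * B.1 = -1 := by
  have hAB := anticommute_of_commutator_eq_negOne h
  exact ⟨mul_self_eq_neg_one_of_trace_eq_zero
      (trace_eq_zero_of_anticommute (neg_eq_iff_eq_neg.mpr hAB).symm),
    mul_self_eq_neg_one_of_trace_eq_zero (trace_eq_zero_of_anticommute hAB)⟩

theorem exists_conj_eq_of_mul_self_eq_neg_one {X Y Z : SU2} (hX : X.1 * X.1 = -1)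
    (hY : Y.1 * Y.1 = -1) (hZX : Z.1 * X.1 = -(X.1 * Z.1)) :
    ∃ w : SU2, w * X * w⁻¹ = Y ∧ (Z.1 * Y.1 = -(Y.1 * Z.1) → Commute Z.1 w.1) := by
  by_cases hYX : Y.1 * X.1 = 1
  · have hXY : X.1 = -Y.1 :=
      calc X.1 = -(Y.1 * Y.1) * X.1 := by rw [hY, neg_neg, one_mul]
        _ = -Y.1 * (Y.1 * X.1) := by noncomm_ring
        _ = -Y.1 := by rw [hYX, mul_one]
    refine ⟨Z, conj_eq_iff_mul_eq.mpr ?_, fun _ => Commute.refl _⟩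
    rw [hZX, hXY, neg_mul, neg_neg]
  · have hM : 1 - Y.1 * X.1 = !![1 - (Y * X).1 0 0, -(Y * X).1 0 1;
        -conj (-(Y * X).1 0 1), conj (1 - (Y * X).1 0 0)] := by
      conv_lhs => rw [show Y.1 * X.1 = (Y * X).1 from rfl, eta_fin_two (Y * X)]
      ext i j; fin_cases i <;> fin_cases j <;> simp
    obtain ⟨r, w, hw⟩ := exists_coe_eq_smul (hM ▸ sub_ne_zero.mpr (Ne.symm hYX))
    rw [← hM] at hw
    refine ⟨w, conj_eq_iff_mul_eq.mpr ?_, fun hZY => ?_⟩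
    · rw [hw, smul_mul_assoc, one_sub_mul_mul_eq_mul_one_sub_mul hX hY, mul_smul_comm]
    · rw [hw]
      exact (commute_one_sub_mul_of_anticommute hZX hZY).smul_right r

theorem exists_conj_eq_A₀_B₀ {A B : SU2} (h : A * B * A⁻¹ * B⁻¹ = negOne) :
    ∃ u : SU2, u * A * u⁻¹ = A₀ ∧ u * B * u⁻¹ = B₀ := by
  obtain ⟨hA, -⟩ := mul_self_eq_neg_one_of_commutator_eq_negOne h
  obtain ⟨hA₀, hB₀⟩ := mul_self_eq_neg_one_of_commutator_eq_negOne commutator_A₀_B₀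
  obtain ⟨u, hu, -⟩ := exists_conj_eq_of_mul_self_eq_neg_one hA hA₀
    (neg_eq_iff_eq_neg.mpr (anticommute_of_commutator_eq_negOne h)).symm
  have h' : A₀ * (u * B * u⁻¹) * A₀⁻¹ * (u * B * u⁻¹)⁻¹ = negOne := by
    rw [← hu, ← conj_negOne u, ← h]
    group
  obtain ⟨-, hB'⟩ := mul_self_eq_neg_one_of_commutator_eq_negOne h'
  obtain ⟨v, hv, hvA₀⟩ := exists_conj_eq_of_mul_self_eq_neg_one hB' hB₀
    (anticommute_of_commutator_eq_negOne h')
  have hvA₀ : v * A₀ * v⁻¹ = A₀ := conj_eq_iff_mul_eq.mpr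
    (hvA₀ (anticommute_of_commutator_eq_negOne commutator_A₀_B₀)).eq.symm
  refine ⟨v * u, ?_, ?_⟩
  · rw [show v * u * A * (v * u)⁻¹ = v * (u * A * u⁻¹) * v⁻¹ by group, hu, hvA₀]
  · rw [show v * u * B * (v * u)⁻¹ = v * (u * B * u⁻¹) * v⁻¹ by group, hv]

theorem commute_of_commute_A₀_of_commute_B₀ {u : SU2} (hA : Commute u.1 A₀.1)
    (hB : Commute u.1 B₀.1) (M : Matrix (Fin 2) (Fin 2) ℂ) : Commute u.1 M := by
  have h01 : u.1 0 1 = 0 := by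
    have := congrFun (congrFun hA.eq 0) 1
    simp [A₀, Matrix.mul_apply, Fin.sum_univ_succ] at this
    linear_combination (I / 2) * this + u.1 0 1 * Complex.I_sq
  have h00 : conj (u.1 0 0) = u.1 0 0 := by
    have := congrFun (congrFun hB.eq 0) 1
    simp [B₀, Matrix.mul_apply, Fin.sum_univ_succ] at this
    have h11 : u.1 1 1 = conj (u.1 0 0) := by
      simpa using congrFun (congrFun (eta_fin_two u) 1) 1
    rw [← h11, this]
  have hu : u.1 = u.1 0 0 • 1 := by
    rw [eta_fin_two u, h01, h00]
    ext i j; fin_cases i <;> fin_cases j <;> simp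
  rw [hu]
  exact (Commute.one_left M).smul_left _

theorem conj_eq_self_of_conj_A₀_of_conj_B₀ {u : SU2} (hA : u * A₀ * u⁻¹ = A₀)
    (hB : u * B₀ * u⁻¹ = B₀) (X : SU2) : u * X * u⁻¹ = X :=
  conj_eq_iff_mul_eq.mpr <| commute_of_commute_A₀_of_commute_B₀
    (conj_eq_iff_mul_eq.mp hA) (conj_eq_iff_mul_eq.mp hB) X.1

end SU2

theorem conjRel_equivalence (g : ℕ) : Equivalence (@ConjRel g) where
  refl _ := ⟨1, fun _ => by group, fun _ => by group⟩
  symm := fun ⟨u, h₁, h₂⟩ =>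
    ⟨u⁻¹, fun i => by rw [← h₁ i]; group, fun i => by rw [← h₂ i]; group⟩
  trans := fun ⟨u, h₁, h₂⟩ ⟨w, h₃, h₄⟩ =>
    ⟨w * u, fun i => by rw [← h₃ i, ← h₁ i]; group,
      fun i => by rw [← h₄ i, ← h₂ i]; group⟩

section stdL1

variable {g : ℕ} (hg : 2 ≤ g)

theorem eq_lastIdx_of_not_lt {i : Fin g} (hi : ¬(i : ℕ) < g - 1) : i = lastIdx g hg :=
  Fin.ext (by simp only [lastIdx]; omega)

theorem stdL1_fst_lastIdx (v : Fin (g - 1) → SU2) : (stdL1 g v).1 (lastIdx g hg) = A₀ := by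
  simp [stdL1, lastIdx]

theorem stdL1_snd_lastIdx (v : Fin (g - 1) → SU2) : (stdL1 g v).2 (lastIdx g hg) = B₀ := by
  simp [stdL1, lastIdx]
  omega

theorem stdL1_fst_castLE (v : Fin (g - 1) → SU2) (j : Fin (g - 1)) :
    (stdL1 g v).1 (Fin.castLE (Nat.sub_le g 1) j) = v j := by
  simp [stdL1]

theorem conjRel_stdL1_of_mem {p : SU2Tuple g} (hp : p ∈ L1set g hg) {u : SU2}
    (hA : u * p.1 (lastIdx g hg) * u⁻¹ = A₀) (hB : u * p.2 (lastIdx g hg) * u⁻¹ = B₀) :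
    ConjRel p (stdL1 g fun j => u * p.1 (Fin.castLE (Nat.sub_le g 1) j) * u⁻¹) := by
  obtain ⟨hB₁, hB_mid, -⟩ := hp
  refine ⟨u, fun i => ?_, fun i => ?_⟩
  · by_cases hi : (i : ℕ) < g - 1
    · simp [stdL1, hi]
    · rw [eq_lastIdx_of_not_lt hg hi, stdL1_fst_lastIdx, hA]
  · by_cases hi : (i : ℕ) < g - 1
    · rcases Nat.eq_zero_or_pos i with hi₀ | hi₀
      · rw [show i = ⟨0, by omega⟩ from Fin.ext hi₀]
        simp [stdL1, hB₁, SU2.conj_negOne]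
      · simp [stdL1, hi, hB_mid i hi₀ hi, hi₀.ne']
    · rw [eq_lastIdx_of_not_lt hg hi, stdL1_snd_lastIdx, hB]

end stdL1

/-- The map from `SU(2)^{g-1}` to the quotient of `L₁` by simultaneous conjugation,
sending `(A₁,…,A_{g-1})` to the class of the tuple with these first `g-1` entries,
`A_g = A₀`, `B₁ = -1`, `Bᵢ = 1` for `2 ≤ i ≤ g-1`, and `B_g = B₀`, is a bijection.
In particular the quotient of `L₁` by simultaneous conjugation is in bijection with
`SU(2)^{g-1}`. -/
theorem L1_quotient_bijective_SU2_pow (g : ℕ) (hg : 2 ≤ g) :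
    Function.Bijective
      (fun v : Fin (g - 1) → SU2 =>
        Quot.mk (fun p q : L1set g hg => ConjRel p.1 q.1)
          ⟨stdL1 g v, stdL1_mem g hg v⟩) := by
  constructor
  · intro v w hvw
    obtain ⟨u, hA, hB⟩ :=
      ((conjRel_equivalence g).comap Subtype.val).eqvGen_iff.mp (Quot.eq.mp hvw)
    dsimp only at hA hB
    have hu := SU2.conj_eq_self_of_conj_A₀_of_conj_B₀
      (by simpa only [stdL1_fst_lastIdx] using hA (lastIdx g hg))
      (by simpa only [stdL1_snd_lastIdx] using hB (lastIdx g hg))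
    funext j
    simpa only [stdL1_fst_castLE, hu] using hA (Fin.castLE (Nat.sub_le g 1) j)
  · rintro ⟨p, hp⟩
    obtain ⟨u, hA, hB⟩ := SU2.exists_conj_eq_A₀_B₀ hp.2.2
    refine ⟨fun j => u * p.1 (Fin.castLE (Nat.sub_le g 1) j) * u⁻¹, (Quot.sound ?_).symm⟩
    exact conjRel_stdL1_of_mem hg hp hA hB
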